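/- Let ε, β > 0, let ζ(X), b(X) be smooth (X ∈ ℝ²) with h := 1 + εζ − βb > 0, and let V̄(X) ∈ ℝ² be a smooth vector field independent of z. Define (T V̄)(z) = ∫_z^{εζ} ∇∇·( ∫_{−1+βb}^{z'} V̄ dz'' ) dz' and T*V̄ = TV̄ − (1/h)∫_{−1+βb}^{εζ} TV̄ dz. Then for −1+βb ≤ z ≤ εζ one has the explicit formula T*V̄ = −(1/2)( (z+1−βb)² − h²/3 ) ∇(∇·V̄) + β ( z − εζ + h/2 ) [ ∇b (∇·V̄) + ∇(∇b·V̄) ]. -/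

import Mathlib

noncomputable section

open intervalIntegral

def Smooth2 (f : ℝ → ℝ → ℝ) : Prop :=
  ContDiff ℝ (⊤ : ℕ∞) fun p : ℝ × ℝ => f p.1 p.2

noncomputable def qx (f : ℝ → ℝ → ℝ) (x y : ℝ) : ℝ := deriv (fun u => f u y) x
noncomputable def qy (f : ℝ → ℝ → ℝ) (x y : ℝ) : ℝ := deriv (fun u => f x u) y
/-- i-th horizontal derivative of a function of (x,y) -/
noncomputable def qd (i : Fin 2) (f : ℝ → ℝ → ℝ) (x y : ℝ) : ℝ :=
  if i = 0 then qx f x y else qy f x y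

/-- (T V̄)(z) = ∫_z^{εζ} ∇∇·(∫_{−1+βb}^{z'} V̄) dz', i-th component, for a
z-independent field V̄. -/
noncomputable def TopS (ε β : ℝ) (ζ : ℝ → ℝ → ℝ) (b : ℝ → ℝ → ℝ)
    (Vb : Fin 2 → ℝ → ℝ → ℝ) (i : Fin 2) (x y z : ℝ) : ℝ :=
  ∫ zp in z..(ε * ζ x y),
    qd i (fun x' y' =>
      qx (fun u v => ∫ z'' in (-1 + β * b u v)..zp, Vb 0 u v) x' y'
        + qy (fun u v => ∫ z'' in (-1 + β * b u v)..zp, Vb 1 u v) x' y') x y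

/-- T*V̄ = TV̄ − (1/h)∫_{−1+βb}^{εζ} TV̄ dz. -/
noncomputable def TstarS (ε β : ℝ) (ζ : ℝ → ℝ → ℝ) (b : ℝ → ℝ → ℝ)
    (Vb : Fin 2 → ℝ → ℝ → ℝ) (i : Fin 2) (x y z : ℝ) : ℝ :=
  TopS ε β ζ b Vb i x y z
    - (1 + ε * ζ x y - β * b x y)⁻¹ *
        ∫ zq in (-1 + β * b x y)..(ε * ζ x y), TopS ε β ζ b Vb i x y zq

namespace Tst
variable {f g : ℝ → ℝ → ℝ} {x y c : ℝ} {i : Fin 2}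

lemma sm_fst (hf : Smooth2 f) (y : ℝ) : ContDiff ℝ (⊤ : ℕ∞) fun u => f u y :=
  hf.comp (contDiff_id.prodMk contDiff_const)
lemma sm_snd (hf : Smooth2 f) (x : ℝ) : ContDiff ℝ (⊤ : ℕ∞) fun v => f x v :=
  hf.comp (contDiff_const.prodMk contDiff_id)
lemma dfst (hf : Smooth2 f) (x y : ℝ) : DifferentiableAt ℝ (fun u => f u y) x :=
  ((sm_fst hf y).differentiable (by simp)).differentiableAt
lemma dsnd (hf : Smooth2 f) (x y : ℝ) : DifferentiableAt ℝ (fun v => f x v) y :=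
  ((sm_snd hf x).differentiable (by simp)).differentiableAt

lemma smadd (hf : Smooth2 f) (hg : Smooth2 g) : Smooth2 fun u v => f u v + g u v :=
  ContDiff.add hf hg
lemma smmul (hf : Smooth2 f) (hg : Smooth2 g) : Smooth2 fun u v => f u v * g u v :=
  ContDiff.mul hf hg
lemma smconstmul (c : ℝ) (hf : Smooth2 f) : Smooth2 fun u v => c * f u v :=
  ContDiff.mul contDiff_const hf
lemma smconstsub (c : ℝ) (hf : Smooth2 f) : Smooth2 fun u v => c - f u v :=
  ContDiff.sub contDiff_const hf

lemma qx_eq_fderiv (hf : Smooth2 f) (x y : ℝ) :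
    qx f x y = fderiv ℝ (fun p : ℝ × ℝ => f p.1 p.2) (x, y) (1, 0) := by
  have hg : HasFDerivAt (fun u : ℝ => (u, y))
      ((ContinuousLinearMap.id ℝ ℝ).prod (0 : ℝ →L[ℝ] ℝ)) x :=
    (hasFDerivAt_id x).prodMk (hasFDerivAt_const y x)
  have hF : HasFDerivAt (fun p : ℝ × ℝ => f p.1 p.2)
      (fderiv ℝ (fun p : ℝ × ℝ => f p.1 p.2) (x, y)) (x, y) :=
    ((hf.differentiable (by simp)) (x, y)).hasFDerivAt
  have h2 : deriv (fun u => f u y) x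
      = (fderiv ℝ (fun p : ℝ × ℝ => f p.1 p.2) (x, y)).comp
          ((ContinuousLinearMap.id ℝ ℝ).prod (0 : ℝ →L[ℝ] ℝ)) 1 :=
    by have := ((hF.comp x hg).hasDerivAt).deriv; exact this
  simp only [qx, h2, ContinuousLinearMap.coe_comp', Function.comp_apply,
    ContinuousLinearMap.prod_apply, ContinuousLinearMap.coe_id', id_eq,
    ContinuousLinearMap.zero_apply]

lemma qy_eq_fderiv (hf : Smooth2 f) (x y : ℝ) :
    qy f x y = fderiv ℝ (fun p : ℝ × ℝ => f p.1 p.2) (x, y) (0, 1) := by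
  have hg : HasFDerivAt (fun v : ℝ => (x, v))
      ((0 : ℝ →L[ℝ] ℝ).prod (ContinuousLinearMap.id ℝ ℝ)) y :=
    (hasFDerivAt_const x y).prodMk (hasFDerivAt_id y)
  have hF : HasFDerivAt (fun p : ℝ × ℝ => f p.1 p.2)
      (fderiv ℝ (fun p : ℝ × ℝ => f p.1 p.2) (x, y)) (x, y) :=
    ((hf.differentiable (by simp)) (x, y)).hasFDerivAt
  have h2 : deriv (fun v => f x v) y
      = (fderiv ℝ (fun p : ℝ × ℝ => f p.1 p.2) (x, y)).comp
          ((0 : ℝ →L[ℝ] ℝ).prod (ContinuousLinearMap.id ℝ ℝ)) 1 :=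
    by have := ((hF.comp y hg).hasDerivAt).deriv; exact this
  simp only [qy, h2, ContinuousLinearMap.coe_comp', Function.comp_apply,
    ContinuousLinearMap.prod_apply, ContinuousLinearMap.coe_id', id_eq,
    ContinuousLinearMap.zero_apply]

lemma smooth_qx (hf : Smooth2 f) : Smooth2 (qx f) := by
  have h2 : ContDiff ℝ (⊤ : ℕ∞) fun p : ℝ × ℝ =>
      fderiv ℝ (fun q : ℝ × ℝ => f q.1 q.2) p (1, 0) :=
    (hf.fderiv_right (by simp)).clm_apply contDiff_const
  have h3 : (fun p : ℝ × ℝ => qx f p.1 p.2)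
      = fun p : ℝ × ℝ => fderiv ℝ (fun q : ℝ × ℝ => f q.1 q.2) p (1, 0) :=
    funext fun p => qx_eq_fderiv hf p.1 p.2
  unfold Smooth2; rw [h3]; exact h2

lemma smooth_qy (hf : Smooth2 f) : Smooth2 (qy f) := by
  have h2 : ContDiff ℝ (⊤ : ℕ∞) fun p : ℝ × ℝ =>
      fderiv ℝ (fun q : ℝ × ℝ => f q.1 q.2) p (0, 1) :=
    (hf.fderiv_right (by simp)).clm_apply contDiff_const
  have h3 : (fun p : ℝ × ℝ => qy f p.1 p.2)
      = fun p : ℝ × ℝ => fderiv ℝ (fun q : ℝ × ℝ => f q.1 q.2) p (0, 1) :=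
    funext fun p => qy_eq_fderiv hf p.1 p.2
  unfold Smooth2; rw [h3]; exact h2

lemma qx_add (hf : Smooth2 f) (hg : Smooth2 g) :
    qx (fun u v => f u v + g u v) x y = qx f x y + qx g x y :=
  deriv_add (dfst hf x y) (dfst hg x y)
lemma qy_add (hf : Smooth2 f) (hg : Smooth2 g) :
    qy (fun u v => f u v + g u v) x y = qy f x y + qy g x y :=
  deriv_add (dsnd hf x y) (dsnd hg x y)
lemma qx_mul (hf : Smooth2 f) (hg : Smooth2 g) :
    qx (fun u v => f u v * g u v) x y = qx f x y * g x y + f x y * qx g x y :=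
  deriv_mul (dfst hf x y) (dfst hg x y)
lemma qy_mul (hf : Smooth2 f) (hg : Smooth2 g) :
    qy (fun u v => f u v * g u v) x y = qy f x y * g x y + f x y * qy g x y :=
  deriv_mul (dsnd hf x y) (dsnd hg x y)
lemma qx_sub (hf : Smooth2 f) (hg : Smooth2 g) :
    qx (fun u v => f u v - g u v) x y = qx f x y - qx g x y :=
  deriv_sub (dfst hf x y) (dfst hg x y)
lemma qy_sub (hf : Smooth2 f) (hg : Smooth2 g) :
    qy (fun u v => f u v - g u v) x y = qy f x y - qy g x y :=
  deriv_sub (dsnd hf x y) (dsnd hg x y)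
lemma qx_const_mul (hf : Smooth2 f) :
    qx (fun u v => c * f u v) x y = c * qx f x y :=
  deriv_const_mul c (dfst hf x y)
lemma qy_const_mul (hf : Smooth2 f) :
    qy (fun u v => c * f u v) x y = c * qy f x y :=
  deriv_const_mul c (dsnd hf x y)
lemma qx_const_sub : qx (fun u v => c - f u v) x y = -qx f x y := by
  unfold qx; exact deriv_const_sub c
lemma qy_const_sub : qy (fun u v => c - f u v) x y = -qy f x y := by
  unfold qy; exact deriv_const_sub c

lemma qd_add (hf : Smooth2 f) (hg : Smooth2 g) :
    qd i (fun u v => f u v + g u v) x y = qd i f x y + qd i g x y := by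
  unfold qd; split
  · exact qx_add hf hg
  · exact qy_add hf hg
lemma qd_mul (hf : Smooth2 f) (hg : Smooth2 g) :
    qd i (fun u v => f u v * g u v) x y = qd i f x y * g x y + f x y * qd i g x y := by
  unfold qd; split
  · exact qx_mul hf hg
  · exact qy_mul hf hg
lemma qd_sub (hf : Smooth2 f) (hg : Smooth2 g) :
    qd i (fun u v => f u v - g u v) x y = qd i f x y - qd i g x y := by
  unfold qd; split
  · exact qx_sub hf hg
  · exact qy_sub hf hg
lemma qd_const_mul (hf : Smooth2 f) :
    qd i (fun u v => c * f u v) x y = c * qd i f x y := by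
  unfold qd; split
  · exact qx_const_mul hf
  · exact qy_const_mul hf
lemma qd_const_sub : qd i (fun u v => c - f u v) x y = -qd i f x y := by
  unfold qd; split
  · exact qx_const_sub
  · exact qy_const_sub

lemma integral_quadratic (c2 c1 c0 a b : ℝ) :
    ∫ x in a..b, (c2 * x ^ 2 + c1 * x + c0) =
      c2 * (b ^ 3 - a ^ 3) / 3 + c1 * (b ^ 2 - a ^ 2) / 2 + c0 * (b - a) := by
  have h2 : IntervalIntegrable (fun x : ℝ => c2 * x ^ 2) MeasureTheory.volume a b :=
    (continuous_const.mul (continuous_pow 2)).intervalIntegrable _ _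
  have h1 : IntervalIntegrable (fun x : ℝ => c1 * x) MeasureTheory.volume a b :=
    (continuous_const.mul continuous_id).intervalIntegrable _ _
  rw [intervalIntegral.integral_add (h2.add h1) intervalIntegrable_const,
    intervalIntegral.integral_add h2 h1,
    intervalIntegral.integral_const_mul, intervalIntegral.integral_const_mul,
    integral_pow, integral_id, intervalIntegral.integral_const, smul_eq_mul]
  norm_num; ring

lemma TopS_eq (ε β : ℝ) (ζ b : ℝ → ℝ → ℝ) (Vb : Fin 2 → ℝ → ℝ → ℝ)
    (hb : Smooth2 b) (hVb : ∀ j, Smooth2 (Vb j)) (i : Fin 2) (x y z : ℝ) :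
    TopS ε β ζ b Vb i x y z =
      qd i (fun u v => qx (Vb 0) u v + qy (Vb 1) u v) x y *
        ((ε * ζ x y + 1 - β * b x y) ^ 2 - (z + 1 - β * b x y) ^ 2) / 2
      - β * (qd i b x y * (qx (Vb 0) x y + qy (Vb 1) x y)
          + qd i (fun u v => qx b u v * Vb 0 u v + qy b u v * Vb 1 u v) x y)
        * (ε * ζ x y - z) := by
  have hD : Smooth2 (fun u v => qx (Vb 0) u v + qy (Vb 1) u v) :=
    smadd (smooth_qx (hVb 0)) (smooth_qy (hVb 1))
  have hC : Smooth2 (fun u v => qx b u v * Vb 0 u v + qy b u v * Vb 1 u v) :=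
    smadd (smmul (smooth_qx hb) (hVb 0)) (smmul (smooth_qy hb) (hVb 1))
  have key : ∀ zp : ℝ,
      qd i (fun x' y' =>
        qx (fun u v => ∫ z'' in (-1 + β * b u v)..zp, Vb 0 u v) x' y'
          + qy (fun u v => ∫ z'' in (-1 + β * b u v)..zp, Vb 1 u v) x' y') x y
      = 0 * zp ^ 2 + qd i (fun u v => qx (Vb 0) u v + qy (Vb 1) u v) x y * zp
        + ((1 - β * b x y) * qd i (fun u v => qx (Vb 0) u v + qy (Vb 1) u v) x y
            - β * (qd i b x y * (qx (Vb 0) x y + qy (Vb 1) x y)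
              + qd i (fun u v => qx b u v * Vb 0 u v + qy b u v * Vb 1 u v) x y)) := by
    intro zp
    have hfac : Smooth2 (fun u v : ℝ => zp + 1 - β * b u v) :=
      smconstsub (zp + 1) (smconstmul β hb)
    have e0 : (fun u v : ℝ => ∫ z'' in (-1 + β * b u v)..zp, Vb 0 u v)
        = fun u v => (zp + 1 - β * b u v) * Vb 0 u v := by
      funext u v
      rw [intervalIntegral.integral_const, smul_eq_mul]; ring
    have e0' : (fun u v : ℝ => ∫ z'' in (-1 + β * b u v)..zp, Vb 1 u v)
        = fun u v => (zp + 1 - β * b u v) * Vb 1 u v := by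
      funext u v
      rw [intervalIntegral.integral_const, smul_eq_mul]; ring
    have e2 : ∀ x' y' : ℝ, qx (fun u v : ℝ => zp + 1 - β * b u v) x' y'
        = -(β * qx b x' y') := by
      intro x' y'
      have h1 : qx (fun u v : ℝ => zp + 1 - β * b u v) x' y'
          = -qx (fun u v : ℝ => β * b u v) x' y' := qx_const_sub
      rw [h1, qx_const_mul hb]
    have e2' : ∀ x' y' : ℝ, qy (fun u v : ℝ => zp + 1 - β * b u v) x' y'
        = -(β * qy b x' y') := by
      intro x' y'
      have h1 : qy (fun u v : ℝ => zp + 1 - β * b u v) x' y'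
          = -qy (fun u v : ℝ => β * b u v) x' y' := qy_const_sub
      rw [h1, qy_const_mul hb]
    have e1 : (fun x' y' : ℝ =>
        qx (fun u v => (zp + 1 - β * b u v) * Vb 0 u v) x' y'
          + qy (fun u v => (zp + 1 - β * b u v) * Vb 1 u v) x' y')
        = fun x' y' =>
            (zp + 1 - β * b x' y') * (qx (Vb 0) x' y' + qy (Vb 1) x' y')
              - β * (qx b x' y' * Vb 0 x' y' + qy b x' y' * Vb 1 x' y') := by
      funext x' y'
      have m0 : qx (fun u v => (zp + 1 - β * b u v) * Vb 0 u v) x' y'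
          = qx (fun u v : ℝ => zp + 1 - β * b u v) x' y' * Vb 0 x' y'
            + (zp + 1 - β * b x' y') * qx (Vb 0) x' y' := qx_mul hfac (hVb 0)
      have m1 : qy (fun u v => (zp + 1 - β * b u v) * Vb 1 u v) x' y'
          = qy (fun u v : ℝ => zp + 1 - β * b u v) x' y' * Vb 1 x' y'
            + (zp + 1 - β * b x' y') * qy (Vb 1) x' y' := qy_mul hfac (hVb 1)
      rw [m0, m1, e2 x' y', e2' x' y']; ring
    rw [e0, e0', e1]
    have s1 : qd i (fun x' y' : ℝ =>
        (zp + 1 - β * b x' y') * (qx (Vb 0) x' y' + qy (Vb 1) x' y')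
          - β * (qx b x' y' * Vb 0 x' y' + qy b x' y' * Vb 1 x' y')) x y
        = qd i (fun u v : ℝ =>
            (zp + 1 - β * b u v) * (qx (Vb 0) u v + qy (Vb 1) u v)) x y
          - qd i (fun u v : ℝ =>
              β * (qx b u v * Vb 0 u v + qy b u v * Vb 1 u v)) x y :=
      qd_sub (smmul hfac hD) (smconstmul β hC)
    have s2 : qd i (fun u v : ℝ =>
        (zp + 1 - β * b u v) * (qx (Vb 0) u v + qy (Vb 1) u v)) x y
        = qd i (fun u v : ℝ => zp + 1 - β * b u v) x y
            * (qx (Vb 0) x y + qy (Vb 1) x y)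
          + (zp + 1 - β * b x y)
            * qd i (fun u v => qx (Vb 0) u v + qy (Vb 1) u v) x y :=
      qd_mul hfac hD
    have s3 : qd i (fun u v : ℝ =>
        β * (qx b u v * Vb 0 u v + qy b u v * Vb 1 u v)) x y
        = β * qd i (fun u v => qx b u v * Vb 0 u v + qy b u v * Vb 1 u v) x y :=
      qd_const_mul hC
    have s4 : qd i (fun u v : ℝ => zp + 1 - β * b u v) x y
        = -(β * qd i b x y) := by
      have h1 : qd i (fun u v : ℝ => zp + 1 - β * b u v) x y
          = -qd i (fun u v : ℝ => β * b u v) x y := qd_const_sub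
      rw [h1, qd_const_mul hb]
    rw [s1, s2, s3, s4]; ring
  unfold TopS
  simp only [key]
  rw [integral_quadratic]
  ring

end Tst

lemma quad_form (A B W p zq : ℝ) :
    A * ((W + 1 - p) ^ 2 - (zq + 1 - p) ^ 2) / 2 - B * (W - zq)
    = -(A / 2) * zq ^ 2 + (B - A * (1 - p)) * zq
      + (A * ((W + 1 - p) ^ 2 - (1 - p) ^ 2) / 2 - B * W) := by ring


/-- the explicit formula for T*V̄. -/
theorem Tstar_explicit
    (ε β : ℝ) (hε : 0 < ε) (hβ : 0 < β)
    (ζ b : ℝ → ℝ → ℝ) (Vb : Fin 2 → ℝ → ℝ → ℝ)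
    (hζ : Smooth2 ζ) (hb : Smooth2 b) (hVb : ∀ i, Smooth2 (Vb i))
    (hpos : ∀ x y, 0 < 1 + ε * ζ x y - β * b x y) :
    ∀ (i : Fin 2) (x y z : ℝ), -1 + β * b x y ≤ z → z ≤ ε * ζ x y →
      TstarS ε β ζ b Vb i x y z =
        -(1/2) * ((z + 1 - β * b x y)^2 - (1 + ε * ζ x y - β * b x y)^2 / 3)
            * qd i (fun u v => qx (Vb 0) u v + qy (Vb 1) u v) x y
          + β * (z - ε * ζ x y + (1 + ε * ζ x y - β * b x y) / 2) *
            (qd i b x y * (qx (Vb 0) x y + qy (Vb 1) x y)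
              + qd i (fun u v => qx b u v * Vb 0 u v + qy b u v * Vb 1 u v) x y) := by
  intro i x y z _ _
  have hne : (1 + ε * ζ x y - β * b x y) ≠ 0 := ne_of_gt (hpos x y)
  unfold TstarS
  simp only [Tst.TopS_eq ε β ζ b Vb hb hVb i x y]
  simp only [quad_form]
  rw [Tst.integral_quadratic]
  field_simp
  ring
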